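/- arXiv:2404.18242 — 2 statements merged into one kernel-verified Lean document; each statement's English description precedes it below -/
import Mathlib

section
/- Under Assumptions (A1) and (A3), define for ε, δ > 0 and t ≥ 0: 𝓡_t^{ε,δ} := (δ/(2ε))·( Σ_{i=0}^{⌊t/δ⌋−1} δ·κ'(x(iδ))·f(x(iδ))·E((i+1)δ, t) − ∫₀ᵗ κ'(x(s))·f(x(s))·E(s,t) ds ). Then for every integer p ≥ 1 there exists a constant C > 0, independent of t, ε and δ, such that |𝓡_t^{ε,δ}|^p ≤ C·δ^{2p}/ε^p for all ε, δ ∈ (0,1) and all t ≥ 0. -/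
/-- The sampling map `π_δ(t) = δ·⌊t/δ⌋`. -/
noncomputable def piD (δ t : ℝ) : ℝ := δ * (⌊t / δ⌋ : ℤ)

/-!
Dissipativity of `f` and boundedness of `κ` make the vector field point inwards on large
spheres, so the trajectory stays in a compact interval `[-R, R]` and is Lipschitz in time; on
`[-R, R]` the functions `κ' f` and `f' + κ'` are then bounded and `κ' f` is Lipschitz. On a cell
`[iδ, (i+1)δ]` the Riemann term differs from the integral by `O(δ)·∫ E(s,t) ds`, the leftover
piece `[⌊t/δ⌋δ, t]` contributes `O(δ)`, and `∫₀ᵗ E(s,t) ds ≤ C_*` sums the cells uniformly in `t`.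
Hence the bracket is `O(δ)` and `𝓡` is `O(δ²/ε)`.
-/

open Set Filter MeasureTheory intervalIntegral Real
open scoped NNReal

theorem abs_le_of_hasDerivAt_of_inward {F z : ℝ → ℝ} {ρ R T : ℝ}
    (hF : ∀ v, ρ < |v| → v * F v < 0) (hR : ρ < R)
    (hz : ∀ r ∈ Icc 0 T, HasDerivAt z (F (z r)) r) (h0 : |z 0| ≤ R) :
    ∀ t ∈ Icc 0 T, |z t| ≤ R := by
  have hR0 : 0 ≤ R := (abs_nonneg _).trans h0
  intro t ht
  refine abs_le_of_sq_le_sq ?_ hR0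
  refine image_le_of_deriv_right_lt_deriv_boundary' (f := fun r => z r ^ 2)
    (fun r hr => ((hz r hr).continuousAt.pow 2).continuousWithinAt)
    (fun r hr => ((hz r (Ico_subset_Icc_self hr)).pow 2).hasDerivWithinAt)
    (by simpa only [sq_abs] using pow_le_pow_left₀ (abs_nonneg _) h0 2) continuousOn_const
    (fun _ _ => hasDerivWithinAt_const _ _ _) (fun r _ hr => ?_) ht
  have hzr : |z r| = R := by
    rwa [← sq_eq_sq₀ (abs_nonneg _) hR0, sq_abs]
  have := hF (z r) (hzr ▸ hR)
  norm_num
  linarith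

theorem mul_add_neg_of_dissipative {f κ : ℝ → ℝ} {lam γ : ℝ} (hlam : 0 < lam)
    (hcontr : ∀ a b : ℝ, (a - b) * (f a - f b) ≤ -lam * (a - b) ^ 2)
    (hκbd : ∀ a : ℝ, |κ a| ≤ γ) (v : ℝ) (hv : (|f 0| + γ) / lam < |v|) :
    v * (f v + κ v) < 0 := by
  have hf : v * (f v - f 0) ≤ -lam * |v| ^ 2 := by simpa using hcontr v 0
  have hf0 : v * f 0 ≤ |v| * |f 0| := (le_abs_self _).trans (abs_mul _ _).le
  have hκ : v * κ v ≤ |v| * γ := (le_abs_self _).trans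
    ((abs_mul _ _).trans_le (mul_le_mul_of_nonneg_left (hκbd v) (abs_nonneg v)))
  have hv' : |f 0| + γ < lam * |v| := (div_lt_iff₀' hlam).mp hv
  have hγ : 0 ≤ γ := (abs_nonneg _).trans (hκbd 0)
  have hv0 : 0 < |v| := (div_nonneg (by positivity) hlam.le).trans_lt hv
  nlinarith

def IsIntegralSolution (F : ℝ → ℝ) (x₀ : ℝ) (x : ℝ → ℝ) : Prop :=
  ∀ t, 0 ≤ t → x t = x₀ + ∫ s in (0 : ℝ)..t, F (x s)

namespace IsIntegralSolution

variable {F : ℝ → ℝ} {x₀ : ℝ} {x : ℝ → ℝ}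

theorem apply_zero (hx : IsIntegralSolution F x₀ x) : x 0 = x₀ := by
  simpa using hx 0 le_rfl

theorem continuousOn_Icc (hx : IsIntegralSolution F x₀ x) {T : ℝ} (hT : 0 ≤ T)
    (hint : IntervalIntegrable (fun s => F (x s)) volume 0 T) : ContinuousOn x (Icc 0 T) := by
  have hprim := continuousOn_primitive_interval' hint left_mem_uIcc
  rw [uIcc_of_le hT] at hprim
  exact (continuousOn_const.add hprim).congr fun t ht => hx t ht.1

theorem exists_hasDerivAt (hF : Continuous F) (hx : IsIntegralSolution F x₀ x) {T : ℝ}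
    (hT : 0 ≤ T) (hint : IntervalIntegrable (fun s => F (x s)) volume 0 T) :
    ∃ z : ℝ → ℝ, EqOn z x (Icc 0 T) ∧ ∀ r ∈ Icc 0 T, HasDerivAt z (F (z r)) r := by
  set y : ℝ → ℝ := fun s => x (projIcc 0 T hT s)
  have hy : Continuous y := (hx.continuousOn_Icc hT hint).comp_continuous
    (continuous_subtype_val.comp continuous_projIcc) fun s => (projIcc 0 T hT s).2
  have hyx : EqOn y x (Icc 0 T) := fun s hs => by simp [y, projIcc_of_mem hT hs]
  have hzx : EqOn (fun r => x₀ + ∫ s in (0 : ℝ)..r, F (y s)) x (Icc 0 T) := fun r hr => by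
    rw [hx r hr.1]
    refine congrArg (x₀ + ·) (intervalIntegral.integral_congr fun s hs => ?_)
    rw [uIcc_of_le hr.1] at hs
    simp only [hyx ⟨hs.1, hs.2.trans hr.2⟩]
  refine ⟨_, hzx, fun r hr => ?_⟩
  have hzr : x₀ + ∫ s in (0 : ℝ)..r, F (y s) = y r := (hzx hr).trans (hyx hr).symm
  rw [hzr]
  exact ((hF.comp hy).integral_hasStrictDerivAt 0 r).hasDerivAt.const_add x₀

theorem abs_le_of_intervalIntegrable (hF : Continuous F) (hx : IsIntegralSolution F x₀ x)
    {ρ R : ℝ} (hinward : ∀ v, ρ < |v| → v * F v < 0) (hR : ρ < R) (h0 : |x₀| ≤ R) {T : ℝ}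
    (hT : 0 ≤ T) (hint : IntervalIntegrable (fun s => F (x s)) volume 0 T) :
    ∀ t ∈ Icc 0 T, |x t| ≤ R := by
  obtain ⟨z, hzx, hz⟩ := hx.exists_hasDerivAt hF hT hint
  intro t ht
  rw [← hzx ht]
  refine abs_le_of_hasDerivAt_of_inward hinward hR hz ?_ t ht
  rwa [hzx ⟨le_rfl, hT⟩, hx.apply_zero]

/-- A priori the integral in `IsIntegralSolution` may be the junk value `0`. It is not: past the
first time `τ` at which integrability fails `x` would be constant, and before `τ` it is continuous
and bounded, so `F ∘ x` would be integrable on `[0, τ + 1]`. -/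
theorem intervalIntegrable (hF : Continuous F) (hx : IsIntegralSolution F x₀ x) {ρ : ℝ}
    (hinward : ∀ v, ρ < |v| → v * F v < 0) {T : ℝ} (hT : 0 ≤ T) :
    IntervalIntegrable (fun s => F (x s)) volume 0 T := by
  set g : ℝ → ℝ := fun s => F (x s)
  set R := max |x₀| ρ + 1
  have hR : ρ < R := by linarith [le_max_right |x₀| ρ]
  have h0 : |x₀| ≤ R := by linarith [le_max_left |x₀| ρ]
  obtain ⟨M, hM⟩ := isCompact_Icc.exists_bound_of_continuousOn (s := Icc (-R) R) hF.continuousOn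
  by_contra hbad
  set bad := {T : ℝ | 0 ≤ T ∧ ¬ IntervalIntegrable g volume 0 T}
  have hne : bad.Nonempty := ⟨T, hT, hbad⟩
  have hbdd : BddBelow bad := ⟨0, fun _ h => h.1⟩
  set τ := sInf bad
  have hτ : 0 ≤ τ := le_csInf hne fun _ h => h.1
  have hgood : ∀ t, 0 ≤ t → t < τ → IntervalIntegrable g volume 0 t := fun t ht htτ =>
    by_contra fun h => (csInf_le hbdd ⟨ht, h⟩).not_gt htτ
  have hbad_of_lt : ∀ t, τ < t → ¬ IntervalIntegrable g volume 0 t := fun t ht hint => by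
    obtain ⟨b, ⟨hb, hbint⟩, hbt⟩ := (csInf_lt_iff hbdd hne).mp ht
    exact hbint (hint.mono_set (uIcc_subset_uIcc_left (mem_uIcc_of_le hb hbt.le)))
  have hxR : ∀ s ∈ Ico 0 τ, |x s| ≤ R := fun s hs =>
    hx.abs_le_of_intervalIntegrable hF hinward hR h0 hs.1 (hgood s hs.1 hs.2) s ⟨hs.1, le_rfl⟩
  have hcont : ContinuousOn x (Ico 0 τ) := fun s hs => by
    obtain ⟨t, hst, htτ⟩ := exists_between hs.2
    have hst0 : 0 ≤ t := hs.1.trans hst.le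
    exact ((hx.continuousOn_Icc hst0 (hgood t hst0 htτ)) s ⟨hs.1, hst.le⟩).mono_of_mem_nhdsWithin
      (mem_nhdsWithin.mpr ⟨Iio t, isOpen_Iio, hst, fun u hu => ⟨hu.2.1, hu.1.le⟩⟩)
  refine hbad_of_lt (τ + 1) (lt_add_one τ) ?_
  rw [intervalIntegrable_iff_integrableOn_Ioc_of_le (by linarith),
    ← Ioc_union_Ioc_eq_Ioc hτ (by linarith)]
  refine IntegrableOn.union ?_ ?_
  · have hbound : ∀ᵐ s ∂volume.restrict (Ioo 0 τ), ‖g s‖ ≤ M :=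
      (ae_restrict_iff' measurableSet_Ioo).mpr <| ae_of_all _ fun s hs =>
        hM _ (abs_le.mp (hxR s ⟨hs.1.le, hs.2⟩))
    have hIoo : IntegrableOn g (Ioo 0 τ) :=
      Integrable.mono' (integrableOn_const measure_Ioo_lt_top.ne)
        (((hF.comp_continuousOn hcont).mono Ioo_subset_Ico_self).aestronglyMeasurable
          measurableSet_Ioo) hbound
    exact hIoo.congr_set_ae Ioo_ae_eq_Ioc.symm
  · refine (integrableOn_const (C := F x₀) measure_Ioc_lt_top.ne).congr_fun (fun s hs => ?_)
      measurableSet_Ioc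
    simp only [g]
    rw [hx s (hτ.trans hs.1.le), integral_undef (hbad_of_lt s hs.1), add_zero]

theorem exists_mapsTo_Icc (hF : Continuous F) (hx : IsIntegralSolution F x₀ x) {ρ : ℝ}
    (hinward : ∀ v, ρ < |v| → v * F v < 0) : ∃ R, MapsTo x (Ici 0) (Icc (-R) R) :=
  ⟨max |x₀| ρ + 1, fun t ht => abs_le.mp <|
    hx.abs_le_of_intervalIntegrable hF hinward (by linarith [le_max_right |x₀| ρ])
      (by linarith [le_max_left |x₀| ρ]) ht (hx.intervalIntegrable hF hinward ht) t ⟨ht, le_rfl⟩⟩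

theorem lipschitzOnWith (hx : IsIntegralSolution F x₀ x)
    (hint : ∀ T, 0 ≤ T → IntervalIntegrable (fun s => F (x s)) volume 0 T) {M : ℝ≥0}
    (hM : ∀ s, 0 ≤ s → ‖F (x s)‖ ≤ M) : LipschitzOnWith M x (Ici 0) :=
  LipschitzOnWith.of_dist_le_mul fun a ha b hb => by
    rw [dist_eq_norm, hx a ha, hx b hb, add_sub_add_left_eq_sub,
      integral_interval_sub_left (hint a ha) (hint b hb), Real.dist_eq]
    exact norm_integral_le_of_norm_le_const fun s hs => hM s ((le_min hb ha).trans hs.1.le)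

theorem exists_lipschitzOnWith (hF : Continuous F) (hx : IsIntegralSolution F x₀ x) {ρ : ℝ}
    (hinward : ∀ v, ρ < |v| → v * F v < 0) : ∃ M : ℝ≥0, LipschitzOnWith M x (Ici 0) := by
  obtain ⟨R, hR⟩ := hx.exists_mapsTo_Icc hF hinward
  obtain ⟨M, hM⟩ := isCompact_Icc.exists_bound_of_continuousOn (s := Icc (-R) R) hF.continuousOn
  exact ⟨M.toNNReal, hx.lipschitzOnWith (fun T hT => hx.intervalIntegrable hF hinward hT)
    fun s hs => (hM _ (hR hs)).trans (le_coe_toNNReal M)⟩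

end IsIntegralSolution

theorem exists_lipschitzOnWith_mul {g h : ℝ → ℝ} {a b Cg Ch : ℝ} (hg : Differentiable ℝ g)
    (hh : Differentiable ℝ h) (hg' : ∀ y ∈ Icc a b, |deriv g y| ≤ Cg)
    (hh' : ∀ y ∈ Icc a b, |deriv h y| ≤ Ch) :
    ∃ L : ℝ≥0, LipschitzOnWith L (fun y => g y * h y) (Icc a b) := by
  obtain ⟨Bg, hBg⟩ := isCompact_Icc.exists_bound_of_continuousOn hg.continuous.continuousOn
  obtain ⟨Bh, hBh⟩ := isCompact_Icc.exists_bound_of_continuousOn hh.continuous.continuousOn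
  refine ⟨(Cg * Bh + Bg * Ch).toNNReal, (convex_Icc a b).lipschitzOnWith_of_nnnorm_deriv_le
    (fun y _ => (hg y).mul (hh y)) fun y hy => ?_⟩
  rw [← NNReal.coe_le_coe, coe_nnnorm, deriv_fun_mul (hg y) (hh y)]
  refine (norm_add_le _ _).trans (le_trans ?_ (le_coe_toNNReal _))
  rw [norm_mul, norm_mul]
  exact add_le_add
    (mul_le_mul (hg' y hy) (hBh y hy) (norm_nonneg _) ((abs_nonneg _).trans (hg' y hy)))
    (mul_le_mul (hBg y hy) (hh' y hy) (norm_nonneg _) ((norm_nonneg _).trans (hBg y hy)))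

theorem abs_exp_sub_one_le_abs_mul_exp_abs (z : ℝ) : |exp z - 1| ≤ |z| * exp |z| := by
  have h := Complex.norm_exp_sub_sum_le_norm_mul_exp z 1
  simp only [Finset.range_one, Finset.sum_singleton, pow_zero, Nat.factorial_zero, Nat.cast_one,
    div_one, pow_one, Complex.norm_real, Real.norm_eq_abs] at h
  rwa [← Complex.ofReal_exp, ← Complex.ofReal_one, ← Complex.ofReal_sub, Complex.norm_real,
    Real.norm_eq_abs] at h

theorem IntervalIntegrable.mono_set_of_le {g : ℝ → ℝ} {μ : Measure ℝ} {a b c d : ℝ}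
    (hg : IntervalIntegrable g μ a b) (hac : a ≤ c) (hcd : c ≤ d) (hdb : d ≤ b) :
    IntervalIntegrable g μ c d :=
  hg.mono_set (uIcc_subset_uIcc (mem_uIcc_of_le hac (hcd.trans hdb))
    (mem_uIcc_of_le (hac.trans hcd) hdb))

/-- With `w = (f' + κ') ∘ x` this is the factor `E(s, t)` of the statement. -/
noncomputable def propagator (w : ℝ → ℝ) (s t : ℝ) : ℝ := exp (∫ u in s..t, w u)

theorem propagator_pos (w : ℝ → ℝ) (s t : ℝ) : 0 < propagator w s t := exp_pos _

theorem propagator_eq_exp_neg_mul {w : ℝ → ℝ} {s b t : ℝ} (hsb : IntervalIntegrable w volume s b)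
    (hbt : IntervalIntegrable w volume b t) :
    propagator w b t = exp (-∫ u in s..b, w u) * propagator w s t := by
  rw [propagator, propagator, ← exp_add, ← integral_add_adjacent_intervals hsb hbt,
    neg_add_cancel_left]

theorem continuousOn_propagator {w : ℝ → ℝ} {t : ℝ} (hw : IntervalIntegrable w volume 0 t)
    (ht : 0 ≤ t) : ContinuousOn (fun s => propagator w s t) (Icc 0 t) := by
  have h := continuousOn_primitive_interval_left ((intervalIntegrable_iff').mp hw)
  rw [uIcc_of_le ht] at h
  exact continuous_exp.comp_continuousOn h

section RiemannSum

variable {a w : ℝ → ℝ} {L : ℝ≥0} {B Λ t δ : ℝ}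

theorem abs_integral_le_of_abs_le (hwΛ : ∀ s ∈ Icc 0 t, |w s| ≤ Λ) {c d : ℝ} (hc : 0 ≤ c)
    (hcd : c ≤ d) (hd : d ≤ t) : |∫ u in c..d, w u| ≤ Λ * (d - c) := by
  have h := norm_integral_le_of_norm_le_const (a := c) (b := d) (f := w) fun u hu => by
    rw [uIoc_of_le hcd] at hu
    exact hwΛ u ⟨hc.trans hu.1.le, hu.2.trans hd⟩
  rwa [Real.norm_eq_abs, abs_of_nonneg (sub_nonneg.mpr hcd)] at h

theorem abs_mul_propagator_sub_le (ha : LipschitzOnWith L a (Icc 0 t))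
    (haB : ∀ s ∈ Icc 0 t, |a s| ≤ B) (hwΛ : ∀ s ∈ Icc 0 t, |w s| ≤ Λ)
    (hw : IntervalIntegrable w volume 0 t) {r s b : ℝ} (hr : 0 ≤ r) (hrs : r ≤ s) (hsb : s ≤ b)
    (hbt : b ≤ t) (hrb : b - r ≤ δ) (hδ1 : δ ≤ 1) :
    |a r * propagator w b t - a s * propagator w s t| ≤
      (L + B * Λ) * exp Λ * δ * propagator w s t := by
  have hs : s ∈ Icc 0 t := ⟨hr.trans hrs, hsb.trans hbt⟩
  have hΛ : 0 ≤ Λ := (abs_nonneg _).trans (hwΛ s hs)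
  have hδ : 0 ≤ δ := by linarith
  set J := ∫ u in s..b, w u
  have hJ : |J| ≤ Λ * δ := (abs_integral_le_of_abs_le hwΛ hs.1 hsb hbt).trans
    (mul_le_mul_of_nonneg_left (by linarith) hΛ)
  have hJΛ : |J| ≤ Λ := hJ.trans (mul_le_of_le_one_right hΛ hδ1)
  have hexp : exp (-J) ≤ exp Λ := exp_le_exp.mpr ((neg_le_abs J).trans hJΛ)
  have hexp1 : |exp (-J) - 1| ≤ Λ * δ * exp Λ := by
    refine (abs_exp_sub_one_le_abs_mul_exp_abs (-J)).trans ?_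
    rw [abs_neg]
    exact mul_le_mul hJ (exp_le_exp.mpr hJΛ) (exp_pos _).le (by positivity)
  have hars : |a r - a s| ≤ L * δ := by
    have h := ha.dist_le_mul r ⟨hr, hrs.trans hs.2⟩ s hs
    rw [Real.dist_eq, Real.dist_eq, abs_of_nonpos (sub_nonpos.mpr hrs)] at h
    exact h.trans (mul_le_mul_of_nonneg_left (by linarith) L.2)
  rw [propagator_eq_exp_neg_mul (hw.mono_set_of_le hs.1 hsb hbt)
    (hw.mono_set_of_le (hs.1.trans hsb) hbt le_rfl)]
  calc |a r * (exp (-J) * propagator w s t) - a s * propagator w s t|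
      = |(a r - a s) * exp (-J) + a s * (exp (-J) - 1)| * propagator w s t := by
        rw [← abs_of_pos (propagator_pos w s t), ← abs_mul, abs_of_pos (propagator_pos w s t)]
        ring_nf
    _ ≤ (|a r - a s| * exp (-J) + |a s| * |exp (-J) - 1|) * propagator w s t := by
        refine mul_le_mul_of_nonneg_right ((abs_add_le _ _).trans_eq ?_) (propagator_pos w s t).le
        rw [abs_mul, abs_mul, abs_of_pos (exp_pos _)]
    _ ≤ (L * δ * exp Λ + B * (Λ * δ * exp Λ)) * propagator w s t := by
        refine mul_le_mul_of_nonneg_right ?_ (propagator_pos w s t).le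
        have hB : |a s| ≤ B := haB s hs
        gcongr
        exact (abs_nonneg _).trans hB
    _ = (L + B * Λ) * exp Λ * δ * propagator w s t := by ring

theorem abs_mul_propagator_sub_integral_le (ha : LipschitzOnWith L a (Icc 0 t))
    (haB : ∀ s ∈ Icc 0 t, |a s| ≤ B) (hwΛ : ∀ s ∈ Icc 0 t, |w s| ≤ Λ)
    (hw : IntervalIntegrable w volume 0 t) {r b : ℝ} (hr : 0 ≤ r) (hrb : r ≤ b) (hbt : b ≤ t)
    (hδ : b - r = δ) (hδ1 : δ ≤ 1) :
    |δ * a r * propagator w b t - ∫ s in r..b, a s * propagator w s t| ≤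
      (L + B * Λ) * exp Λ * δ * ∫ s in r..b, propagator w s t := by
  have ht : 0 ≤ t := hr.trans (hrb.trans hbt)
  have hE := continuousOn_propagator hw ht
  have hsub : Icc r b ⊆ Icc 0 t := Icc_subset_Icc hr hbt
  have hG : IntervalIntegrable (fun s => a s * propagator w s t) volume r b :=
    ((ha.continuousOn.mul hE).mono hsub).intervalIntegrable_of_Icc hrb
  have hconst : δ * a r * propagator w b t = ∫ _ in r..b, a r * propagator w b t := by
    rw [intervalIntegral.integral_const, smul_eq_mul, hδ, mul_assoc]
  rw [hconst, ← integral_sub intervalIntegrable_const hG, ← intervalIntegral.integral_const_mul,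
    ← Real.norm_eq_abs]
  refine norm_integral_le_of_norm_le hrb (ae_of_all _ fun s hs => ?_)
    (((hE.mono hsub).intervalIntegrable_of_Icc hrb).const_mul _)
  exact abs_mul_propagator_sub_le ha haB hwΛ hw hr hs.1.le hs.2 hbt hδ.le hδ1

theorem propagator_le_exp (hwΛ : ∀ s ∈ Icc 0 t, |w s| ≤ Λ) {s : ℝ} (hs : s ∈ Icc 0 t) :
    propagator w s t ≤ exp (Λ * (t - s)) :=
  exp_le_exp.mpr ((le_abs_self _).trans (abs_integral_le_of_abs_le hwΛ hs.1 hs.2 le_rfl))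

theorem abs_integral_mul_propagator_le (haB : ∀ s ∈ Icc 0 t, |a s| ≤ B)
    (hwΛ : ∀ s ∈ Icc 0 t, |w s| ≤ Λ) {r : ℝ} (hr : 0 ≤ r) (hrt : r ≤ t) (htr : t - r ≤ δ)
    (hδ1 : δ ≤ 1) : |∫ s in r..t, a s * propagator w s t| ≤ B * exp Λ * δ := by
  have ht : t ∈ Icc 0 t := ⟨hr.trans hrt, le_rfl⟩
  have hB : 0 ≤ B := (abs_nonneg _).trans (haB t ht)
  have hΛ : 0 ≤ Λ := (abs_nonneg _).trans (hwΛ t ht)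
  have h := norm_integral_le_of_norm_le_const (a := r) (b := t)
    (f := fun s => a s * propagator w s t) (C := B * exp Λ) fun s hs => by
      rw [uIoc_of_le hrt] at hs
      have hs' : s ∈ Icc 0 t := ⟨hr.trans hs.1.le, hs.2⟩
      rw [Real.norm_eq_abs, abs_mul, abs_of_pos (propagator_pos w s t)]
      refine mul_le_mul (haB s hs') ((propagator_le_exp hwΛ hs').trans (exp_le_exp.mpr ?_))
        (propagator_pos w s t).le hB
      exact mul_le_of_le_one_right hΛ (by linarith [hs.1])
  rw [Real.norm_eq_abs, abs_of_nonneg (sub_nonneg.mpr hrt)] at h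
  exact h.trans (mul_le_mul_of_nonneg_left htr (by positivity))

theorem abs_sum_mul_propagator_sub_integral_le (ha : LipschitzOnWith L a (Icc 0 t))
    (haB : ∀ s ∈ Icc 0 t, |a s| ≤ B) (hwΛ : ∀ s ∈ Icc 0 t, |w s| ≤ Λ)
    (hw : IntervalIntegrable w volume 0 t) {C : ℝ} (hC : ∫ s in 0..t, propagator w s t ≤ C)
    (ht : 0 ≤ t) (hδ : 0 < δ) (hδ1 : δ ≤ 1) :
    |∑ i ∈ Finset.range (⌊t / δ⌋).toNat, δ * a (i * δ) * propagator w ((i + 1) * δ) t -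
        ∫ s in 0..t, a s * propagator w s t| ≤ ((L + B * Λ) * C + B) * exp Λ * δ := by
  set N := (⌊t / δ⌋).toNat
  have hN : (N : ℝ) ≤ t / δ := by
    simpa only [N, Int.floor_toNat] using Nat.floor_le (div_nonneg ht hδ.le)
  have hN' : t / δ < N + 1 := by simpa only [N, Int.floor_toNat] using Nat.lt_floor_add_one (t / δ)
  have hNt : N * δ ≤ t := (le_div_iff₀ hδ).mp hN
  have htN : t - N * δ ≤ δ := by linarith [(div_lt_iff₀ hδ).mp hN']
  have hB : 0 ≤ B := (abs_nonneg _).trans (haB 0 ⟨le_rfl, ht⟩)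
  have hΛ : 0 ≤ Λ := (abs_nonneg _).trans (hwΛ 0 ⟨le_rfl, ht⟩)
  have hE := continuousOn_propagator hw ht
  have hG : ContinuousOn (fun s => a s * propagator w s t) (Icc 0 t) := ha.continuousOn.mul hE
  have hcell : ∀ i < N, (i + 1) * δ ≤ t := fun i hi => by
    have : (i : ℝ) + 1 ≤ N := by exact_mod_cast hi
    nlinarith
  have hsum : ∀ g : ℝ → ℝ, ContinuousOn g (Icc 0 t) →
      ∑ i ∈ Finset.range N, ∫ s in i * δ..(i + 1) * δ, g s = ∫ s in 0..N * δ, g s := by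
    intro g hg
    have h := sum_integral_adjacent_intervals (a := fun i : ℕ => i * δ) (f := g) (μ := volume)
      fun i hi => (hg.mono (Icc_subset_Icc (by positivity) (by push_cast; exact hcell i hi)))
        |>.intervalIntegrable_of_Icc (by push_cast; linarith)
    simpa using h
  have hsplit := integral_add_adjacent_intervals
    ((hG.mono (Icc_subset_Icc le_rfl hNt)).intervalIntegrable_of_Icc (μ := volume) (by positivity))
    ((hG.mono (Icc_subset_Icc (by positivity) le_rfl)).intervalIntegrable_of_Icc hNt)
  rw [← hsplit, ← hsum _ hG, ← sub_sub, ← Finset.sum_sub_distrib]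
  calc _ ≤ (∑ i ∈ Finset.range N, |δ * a (i * δ) * propagator w ((i + 1) * δ) t -
          ∫ s in i * δ..(i + 1) * δ, a s * propagator w s t|) +
        |∫ s in N * δ..t, a s * propagator w s t| :=
        (abs_sub _ _).trans (add_le_add (Finset.abs_sum_le_sum_abs _ _) le_rfl)
    _ ≤ (∑ i ∈ Finset.range N, (L + B * Λ) * exp Λ * δ *
          ∫ s in i * δ..(i + 1) * δ, propagator w s t) + B * exp Λ * δ := by
        refine add_le_add (Finset.sum_le_sum fun i hi => ?_)
          (abs_integral_mul_propagator_le haB hwΛ (by positivity) hNt htN hδ1)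
        exact abs_mul_propagator_sub_integral_le ha haB hwΛ hw (by positivity) (by linarith)
          (hcell i (Finset.mem_range.mp hi)) (by ring) hδ1
    _ = (L + B * Λ) * exp Λ * δ * (∫ s in 0..N * δ, propagator w s t) + B * exp Λ * δ := by
        rw [← Finset.mul_sum, hsum _ hE]
    _ ≤ (L + B * Λ) * exp Λ * δ * C + B * exp Λ * δ := by
        gcongr
        refine le_trans ?_ hC
        exact integral_mono_interval le_rfl (by positivity) hNt
          (ae_of_all _ fun s => (propagator_pos w s t).le) (hE.intervalIntegrable_of_Icc ht)
    _ = ((L + B * Λ) * C + B) * exp Λ * δ := by ring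

end RiemannSum

theorem abs_div_mul_pow_le {D K δ ε : ℝ} (hK : 0 ≤ K) (hδ : 0 < δ) (hε : 0 < ε)
    (hD : |D| ≤ K * δ) (p : ℕ) : |δ / (2 * ε) * D| ^ p ≤ K ^ p * δ ^ (2 * p) / ε ^ p := by
  have h : |δ / (2 * ε) * D| ≤ K * δ ^ 2 / ε := by
    rw [abs_mul, abs_of_pos (by positivity)]
    calc δ / (2 * ε) * |D| ≤ δ / (2 * ε) * (K * δ) := by gcongr
      _ = K * δ ^ 2 / ε / 2 := by field_simp
      _ ≤ K * δ ^ 2 / ε := by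
          have : 0 ≤ K * δ ^ 2 / ε := by positivity
          linarith
  calc _ ≤ (K * δ ^ 2 / ε) ^ p := pow_le_pow_left₀ (abs_nonneg _) h p
    _ = K ^ p * δ ^ (2 * p) / ε ^ p := by rw [div_pow, mul_pow, ← pow_mul]

theorem stmt8_general
    (f κ : ℝ → ℝ) (x₀ : ℝ) (x : ℝ → ℝ)
    -- Assumption (A1)
    (lam γ : ℝ)
    (hlam : 0 < lam)
    (hcontr : ∀ a b : ℝ, (a - b) * (f a - f b) ≤ -lam * (a - b) ^ 2)
    (hκbd : ∀ a : ℝ, |κ a| ≤ γ)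
    -- Assumption (A3)
    (hfd : Differentiable ℝ f) (hfd2 : Differentiable ℝ (deriv f))
    (hκd : Differentiable ℝ κ) (hκd2 : Differentiable ℝ (deriv κ))
    (K : ℝ) (hK : ∀ y : ℝ, |deriv (deriv κ) y| ≤ K)
    (Cstar : ℝ)
    (hint : ∀ m : ℕ, (m = 1 ∨ m = 2) → ∀ t : ℝ, 0 ≤ t →
      (∫ s in (0:ℝ)..t,
        Real.exp ((m : ℝ) * ∫ u in s..t, (deriv f (x u) + deriv κ (x u)))) ≤ Cstar)
    -- the closed-loop ODE `dx/dt = f(x) + κ(x)`, `x(0) = x₀`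
    (hx : ∀ t : ℝ, 0 ≤ t → x t = x₀ + ∫ s in (0:ℝ)..t, (f (x s) + κ (x s)))
    :
    ∀ p : ℕ, 1 ≤ p → ∃ C : ℝ, 0 < C ∧
      ∀ ε δ : ℝ, 0 < ε → ε < 1 → 0 < δ → δ < 1 → ∀ t : ℝ, 0 ≤ t →
      |(δ / (2 * ε)) *
          ((∑ i ∈ Finset.range (⌊t / δ⌋).toNat,
              δ * deriv κ (x ((i : ℝ) * δ)) * f (x ((i : ℝ) * δ)) *
                Real.exp (∫ u in (((i : ℝ) + 1) * δ)..t,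
                  (deriv f (x u) + deriv κ (x u))))
            - ∫ s in (0:ℝ)..t,
                deriv κ (x s) * f (x s) *
                  Real.exp (∫ u in s..t, (deriv f (x u) + deriv κ (x u))))| ^ p
        ≤ C * δ ^ (2 * p) / ε ^ p := by
  intro p _
  have hF : Continuous fun v => f v + κ v := hfd.continuous.add hκd.continuous
  have hsol : IsIntegralSolution (fun v => f v + κ v) x₀ x := hx
  have hinward := mul_add_neg_of_dissipative hlam hcontr hκbd
  obtain ⟨R, hxR⟩ := hsol.exists_mapsTo_Icc hF hinward
  obtain ⟨M, hxM⟩ := hsol.exists_lipschitzOnWith hF hinward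
  obtain ⟨Bf', hBf'⟩ := isCompact_Icc.exists_bound_of_continuousOn (s := Icc (-R) R)
    hfd2.continuous.continuousOn
  obtain ⟨L, hL⟩ := exists_lipschitzOnWith_mul hκd2 hfd (fun y _ => hK y) hBf'
  obtain ⟨B, hB⟩ := isCompact_Icc.exists_bound_of_continuousOn (s := Icc (-R) R)
    (hκd2.continuous.mul hfd.continuous).continuousOn
  obtain ⟨Λ, hΛ⟩ := isCompact_Icc.exists_bound_of_continuousOn (s := Icc (-R) R)
    (hfd2.continuous.add hκd2.continuous).continuousOn
  set D := (((L * M : ℝ≥0) + B * Λ) * Cstar + B) * exp Λ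
  refine ⟨(|D| + 1) ^ p, by positivity, fun ε δ hε _ hδ hδ1 t ht => ?_⟩
  have hw : IntervalIntegrable (fun u => deriv f (x u) + deriv κ (x u)) volume 0 t :=
    ((hfd2.continuous.add hκd2.continuous).comp_continuousOn
      (hxM.continuousOn.mono Icc_subset_Ici_self)).intervalIntegrable_of_Icc ht
  have hRiemann := abs_sum_mul_propagator_sub_integral_le
    (a := fun s => deriv κ (x s) * f (x s)) ((hL.comp hxM hxR).mono Icc_subset_Ici_self)
    (fun s hs => hB _ (hxR hs.1)) (fun s hs => hΛ _ (hxR hs.1)) hw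
    (by simpa [propagator] using hint 1 (Or.inl rfl) t ht) ht hδ hδ1.le
  have hD : D ≤ |D| + 1 := by linarith [le_abs_self D]
  have h := abs_div_mul_pow_le (by positivity) hδ hε
    (hRiemann.trans (mul_le_mul_of_nonneg_right hD hδ.le)) p
  simpa [propagator, mul_assoc] using h

/-- Uniform-in-time bound `|𝓡_t^{ε,δ}|^p ≤ C·δ^{2p}/ε^p` for the difference
between the Riemann sum and the integral of `κ'(x)·f(x)·E(·,t)`, scaled by `δ/(2ε)`. -/
theorem stmt8
    (f κ : ℝ → ℝ) (x₀ : ℝ) (x : ℝ → ℝ)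
    -- Assumption (A1)
    (lam ξ μ Lκ γ : ℝ) (q : ℕ)
    (hlam : 0 < lam) (hξ : 0 < ξ) (hμ : 0 < μ) (hLκ : 0 < Lκ) (hγ : 0 < γ)
    (hcontr : ∀ a b : ℝ, (a - b) * (f a - f b) ≤ -lam * (a - b) ^ 2)
    (hfLip : ∀ a b : ℝ, |f a - f b| ≤ (ξ * (|a| ^ q + |b| ^ q) + μ) * |a - b|)
    (hκLip : ∀ a b : ℝ, |κ a - κ b| ≤ Lκ * |a - b|)
    (hgap : lam / 2 - Lκ > 0)
    (hκbd : ∀ a : ℝ, |κ a| ≤ γ)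
    -- Assumption (A3)
    (hfd : Differentiable ℝ f) (hfd2 : Differentiable ℝ (deriv f))
    (hκd : Differentiable ℝ κ) (hκd2 : Differentiable ℝ (deriv κ))
    (K : ℝ) (hK : ∀ y : ℝ, |deriv (deriv κ) y| ≤ K)
    (cf : ℝ) (rf : ℕ) (hf2 : ∀ y : ℝ, |deriv (deriv f) y| ≤ cf * (1 + |y| ^ rf))
    (Cstar : ℝ) (hCstar : 0 < Cstar)
    (hint : ∀ m : ℕ, (m = 1 ∨ m = 2) → ∀ t : ℝ, 0 ≤ t →
      (∫ s in (0:ℝ)..t,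
        Real.exp ((m : ℝ) * ∫ u in s..t, (deriv f (x u) + deriv κ (x u)))) ≤ Cstar)
    -- the closed-loop ODE `dx/dt = f(x) + κ(x)`, `x(0) = x₀`
    (hx : ∀ t : ℝ, 0 ≤ t → x t = x₀ + ∫ s in (0:ℝ)..t, (f (x s) + κ (x s)))
    :
    ∀ p : ℕ, 1 ≤ p → ∃ C : ℝ, 0 < C ∧
      ∀ ε δ : ℝ, 0 < ε → ε < 1 → 0 < δ → δ < 1 → ∀ t : ℝ, 0 ≤ t →
      |(δ / (2 * ε)) *
          ((∑ i ∈ Finset.range (⌊t / δ⌋).toNat,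
              δ * deriv κ (x ((i : ℝ) * δ)) * f (x ((i : ℝ) * δ)) *
                Real.exp (∫ u in (((i : ℝ) + 1) * δ)..t,
                  (deriv f (x u) + deriv κ (x u))))
            - ∫ s in (0:ℝ)..t,
                deriv κ (x s) * f (x s) *
                  Real.exp (∫ u in s..t, (deriv f (x u) + deriv κ (x u))))| ^ p
        ≤ C * δ ^ (2 * p) / ε ^ p :=
  stmt8_general f κ x₀ x lam γ hlam hcontr hκbd hfd hfd2 hκd hκd2 K hK Cstar hint hx
end

section
/- Under Assumptions (A1) and (A3), define for ε, δ > 0 and t ≥ 0: 𝒮₁^{ε,δ}(t) := ∫₀ᵗ ( (1/ε)·κ'(x(π_δ(s)))·f(x(π_δ(s)))·(s − π_δ(s)) − (δ/(2ε))·κ'(x(s))·f(x(s)) )·E(s,t) ds. Then for every integer p ≥ 1 there exists a constant C > 0, independent of t, ε and δ, such that |𝒮₁^{ε,δ}(t)|^p ≤ C·δ^{2p}/ε^p for all ε, δ ∈ (0,1) and all t ≥ 0. -/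
/-!
The closed-loop field `f + κ` is dissipative with rate `c = λ - L_κ > 0`. Hence the trajectory
stays in a fixed interval `[-R, R]`, and `E(s,t) ≤ exp(-c(t-s))`, so an integrand bounded by
`A·exp(-c(t-s))` has integral at most `A/c`, uniformly in `t`.

With `h = κ'(x)·f(x)`, the integrand of `𝒮₁` is `ε⁻¹` times
`(h(π s) - h(s))(s - π s)·E + (s - π s - δ/2)·h(s)·E`. The first term is `O(δ²)` pointwise, as
`h` is Lipschitz along the trajectory. The second is integrated by parts against the primitive
`ρ` of the centred sawtooth `s - π s - δ/2`, which vanishes at `0` and is bounded by `δ²/8`; the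
derivative of `h·E` again decays like `exp(-c(t-s))`. So `|𝒮₁| ≤ Cδ²/ε`, and its `p`-th power is
at most `Cᵖδ²ᵖ/εᵖ`.
-/

open Set Filter MeasureTheory Real
open scoped Topology

section Sampling

variable {δ : ℝ}

theorem sub_piD_eq (hδ : δ ≠ 0) (s : ℝ) : s - piD δ s = δ * Int.fract (s / δ) := by
  rw [piD, Int.fract, mul_sub, mul_div_cancel₀ s hδ]

theorem piD_le (hδ : 0 < δ) (s : ℝ) : piD δ s ≤ s := by
  have := mul_nonneg hδ.le (Int.fract_nonneg (s / δ))
  linarith [sub_piD_eq hδ.ne' s]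

theorem sub_piD_lt (hδ : 0 < δ) (s : ℝ) : s - piD δ s < δ := by
  rw [sub_piD_eq hδ.ne']
  exact mul_lt_of_lt_one_right hδ (Int.fract_lt_one _)

theorem piD_nonneg (hδ : 0 < δ) {s : ℝ} (hs : 0 ≤ s) : 0 ≤ piD δ s :=
  mul_nonneg hδ.le (by exact_mod_cast Int.floor_nonneg.mpr (div_nonneg hs hδ.le))

theorem piD_zero : piD δ 0 = 0 := by
  simp [piD]

theorem monotone_piD (hδ : 0 < δ) : Monotone (piD δ) := fun _ _ h =>
  mul_le_mul_of_nonneg_left (Int.cast_le.mpr (Int.floor_le_floor (by gcongr))) hδ.le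

theorem measurable_comp_piD {β : Type*} [MeasurableSpace β] (g : ℝ → β) :
    Measurable fun s => g (piD δ s) :=
  (measurable_of_countable fun k : ℤ => g (δ * k)).comp
    (Int.measurable_floor.comp (measurable_id.div_const δ))

theorem piD_eq_of_mem_Ico (hδ : 0 < δ) {s u : ℝ} (hu : u ∈ Ico (piD δ s) (piD δ s + δ)) :
    piD δ u = piD δ s := by
  have hπ : piD δ s = δ * ⌊s / δ⌋ := rfl
  have hfloor : ⌊u / δ⌋ = ⌊s / δ⌋ := by
    rw [Int.floor_eq_iff, le_div_iff₀ hδ, div_lt_iff₀ hδ]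
    constructor <;> linarith [hu.1, hu.2]
  rw [piD, piD, hfloor]

/-- The periodic primitive of the centred sawtooth `s - π_δ(s) - δ/2`, vanishing on `δℤ`. -/
noncomputable def sawtoothPrimitive (δ s : ℝ) : ℝ :=
  ((s - piD δ s) ^ 2 - δ * (s - piD δ s)) / 2

theorem abs_sawtoothPrimitive_le (hδ : 0 < δ) (s : ℝ) :
    |sawtoothPrimitive δ s| ≤ δ ^ 2 / 8 := by
  have h₀ := piD_le hδ s
  have h₁ := sub_piD_lt hδ s
  rw [sawtoothPrimitive, abs_le]
  constructor <;> nlinarith [sq_nonneg (s - piD δ s - δ / 2)]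

theorem sawtoothPrimitive_zero : sawtoothPrimitive δ 0 = 0 := by
  simp [sawtoothPrimitive, piD_zero]

theorem continuous_sawtoothPrimitive (hδ : 0 < δ) : Continuous (sawtoothPrimitive δ) := by
  have hfract :
      Continuous fun s => ((δ * Int.fract (s / δ)) ^ 2 - δ * (δ * Int.fract (s / δ))) / 2 :=
    ContinuousOn.comp_fract (f := fun _ y => ((δ * y) ^ 2 - δ * (δ * y)) / 2)
      (by fun_prop) (continuous_id.div_const δ) (fun _ => by ring)
  refine hfract.congr fun s => ?_
  simp only [sawtoothPrimitive, sub_piD_eq hδ.ne']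

theorem hasDerivWithinAt_sawtoothPrimitive (hδ : 0 < δ) (s : ℝ) :
    HasDerivWithinAt (sawtoothPrimitive δ) (s - piD δ s - δ / 2) (Ioi s) s := by
  set c := piD δ s
  have hquad : HasDerivAt (fun u => ((u - c) ^ 2 - δ * (u - c)) / 2) (s - c - δ / 2) s := by
    have hlin : HasDerivAt (fun u : ℝ => u - c) 1 s := (hasDerivAt_id' s).sub_const c
    exact ((hlin.fun_pow 2).fun_sub (hlin.const_mul δ)).div_const 2 |>.congr_deriv (by ring)
  refine hquad.hasDerivWithinAt.congr_of_eventuallyEq ?_ rfl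
  have hs : s ∈ Ico s (c + δ) := ⟨le_rfl, by linarith [sub_piD_lt hδ s]⟩
  filter_upwards [Ioo_mem_nhdsGT_of_mem hs] with u hu
  rw [sawtoothPrimitive, piD_eq_of_mem_Ico hδ ⟨(piD_le hδ s).trans hu.1.le, hu.2⟩]

end Sampling

section Dissipative

theorem deriv_le_of_dissipative {f : ℝ → ℝ} {c : ℝ}
    (hdiss : ∀ a b, (a - b) * (f a - f b) ≤ -c * (a - b) ^ 2) {a : ℝ}
    (hf : DifferentiableAt ℝ f a) : deriv f a ≤ -c := by
  have hanti : Antitone fun y => f y + c * y := by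
    intro y z hyz
    rcases hyz.eq_or_lt with rfl | hlt
    · rfl
    · have := hdiss z y
      have hpos : 0 < z - y := sub_pos.mpr hlt
      nlinarith
  have hnonpos := hanti.deriv_nonpos (x := a)
  rw [(hf.hasDerivAt.fun_add ((hasDerivAt_id' a).const_mul c)).deriv] at hnonpos
  linarith

theorem lipschitzWith_of_abs_sub_le {κ : ℝ → ℝ} {L : ℝ}
    (hκ : ∀ a b, |κ a - κ b| ≤ L * |a - b|) : LipschitzWith L.toNNReal κ :=
  LipschitzWith.of_dist_le' fun a b => by simpa [dist_eq] using hκ a b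

theorem abs_deriv_le_of_lipschitz {κ : ℝ → ℝ} {L : ℝ}
    (hκ : ∀ a b, |κ a - κ b| ≤ L * |a - b|) (a : ℝ) : |deriv κ a| ≤ L := by
  have hL : 0 ≤ L := by simpa using (abs_nonneg _).trans (hκ 1 0)
  have := norm_deriv_le_of_lipschitz (x₀ := a) (lipschitzWith_of_abs_sub_le hκ)
  rwa [Real.coe_toNNReal L hL] at this

theorem dissipative_add_lipschitz {f κ : ℝ → ℝ} {lam L : ℝ}
    (hf : ∀ a b, (a - b) * (f a - f b) ≤ -lam * (a - b) ^ 2)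
    (hκ : ∀ a b, |κ a - κ b| ≤ L * |a - b|) (a b : ℝ) :
    (a - b) * ((f a + κ a) - (f b + κ b)) ≤ -(lam - L) * (a - b) ^ 2 := by
  have hκab : (a - b) * (κ a - κ b) ≤ L * (a - b) ^ 2 := by
    calc (a - b) * (κ a - κ b) ≤ |a - b| * |κ a - κ b| := by
          rw [← abs_mul]; exact le_abs_self _
      _ ≤ |a - b| * (L * |a - b|) := mul_le_mul_of_nonneg_left (hκ a b) (abs_nonneg _)
      _ = L * (a - b) ^ 2 := by rw [← sq_abs (a - b)]; ring
  nlinarith [hf a b]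

theorem exists_barrier_of_dissipative {F : ℝ → ℝ} {c : ℝ} (hc : 0 < c)
    (hdiss : ∀ a b, (a - b) * (F a - F b) ≤ -c * (a - b) ^ 2) (x₀ : ℝ) :
    ∃ R, |x₀| ≤ R ∧ F R < 0 ∧ 0 < F (-R) := by
  set R := |x₀| + |F 0| / c + 1
  have hcR : |F 0| < c * R := by
    have hcR : c * R = c * |x₀| + |F 0| + c := by
      simp only [R]; rw [mul_add, mul_add, mul_div_cancel₀ _ hc.ne']; ring
    nlinarith [abs_nonneg x₀]
  have hR : 0 < R := by positivity
  refine ⟨R, by linarith [div_nonneg (abs_nonneg (F 0)) hc.le], ?_, ?_⟩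
  · have := hdiss R 0
    nlinarith [le_abs_self (F 0)]
  · have := hdiss 0 (-R)
    nlinarith [neg_abs_le (F 0)]

end Dissipative

section IntegralEquation

variable {F x : ℝ → ℝ} {x₀ R : ℝ}

theorem continuousOn_hasDerivWithinAt_of_integral_eq (hF : Continuous F)
    (hx : ∀ t, 0 ≤ t → x t = x₀ + ∫ s in (0:ℝ)..t, F (x s)) {T : ℝ} (hT : 0 ≤ T)
    (hint : IntervalIntegrable (fun s => F (x s)) volume 0 T) :
    ContinuousOn x (Icc 0 T) ∧ ∀ s ∈ Ico 0 T, HasDerivWithinAt x (F (x s)) (Ici s) s := by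
  have hcont : ContinuousOn x (Icc 0 T) := by
    have hprim := intervalIntegral.continuousOn_primitive_interval
      ((intervalIntegrable_iff' (f := fun s => F (x s))).mp hint)
    rw [uIcc_of_le hT] at hprim
    exact (continuousOn_const.add hprim).congr fun t ht => hx t ht.1
  refine ⟨hcont, fun s hs => ?_⟩
  have hFx : ContinuousOn (fun s => F (x s)) (Icc 0 T) := hF.comp_continuousOn hcont
  have hmem : Icc 0 T ∈ 𝓝[>] s := Icc_mem_nhdsGT_of_mem hs
  have hprim : HasDerivWithinAt (fun u => ∫ τ in (0:ℝ)..u, F (x τ)) (F (x s)) (Ici s) s :=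
    intervalIntegral.integral_hasDerivWithinAt_right
      (hint.mono_set <| by
        rw [uIcc_of_le hs.1, uIcc_of_le hT]; exact Icc_subset_Icc le_rfl hs.2.le)
      ⟨Icc 0 T, hmem, hFx.aestronglyMeasurable measurableSet_Icc⟩
      ((hFx s ⟨hs.1, hs.2.le⟩).mono_of_mem_nhdsWithin hmem)
  exact (hprim.const_add x₀).congr (fun u hu => hx u (hs.1.trans hu)) (hx s hs.1)

theorem abs_le_of_hasDerivWithinAt_of_barrier (hFR : F R < 0) (hFR' : 0 < F (-R)) {T : ℝ}
    (hcont : ContinuousOn x (Icc 0 T))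
    (hderiv : ∀ s ∈ Ico 0 T, HasDerivWithinAt x (F (x s)) (Ici s) s) (hx0 : |x 0| ≤ R) :
    ∀ s ∈ Icc 0 T, |x s| ≤ R := by
  intro s hs
  have hupper : x s ≤ R :=
    image_le_of_deriv_right_lt_deriv_boundary' (B := fun _ => R) (B' := fun _ => 0) hcont
      hderiv (abs_le.mp hx0).2 continuousOn_const (fun u _ => hasDerivWithinAt_const u _ R)
      (fun u _ hu => by rw [hu]; exact hFR) hs
  have hlower : -x s ≤ R :=
    image_le_of_deriv_right_lt_deriv_boundary' (f := fun u => -x u) (B := fun _ => R)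
      (B' := fun _ => 0) hcont.neg (fun u hu => (hderiv u hu).neg)
      (by linarith [(abs_le.mp hx0).1]) continuousOn_const (fun u _ => hasDerivWithinAt_const u _ R)
      (fun u _ hu => by rw [show x u = -R by linarith [hu]]; linarith) hs
  exact abs_le.mpr ⟨by linarith, hupper⟩

/-- Where `F ∘ x` fails to be integrable on `[0, t]`, the integral is `0` and `x t = x₀`. -/
theorem abs_le_of_integral_eq (hF : Continuous F)
    (hx : ∀ t, 0 ≤ t → x t = x₀ + ∫ s in (0:ℝ)..t, F (x s)) (hx₀ : |x₀| ≤ R)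
    (hFR : F R < 0) (hFR' : 0 < F (-R)) {t : ℝ} (ht : 0 ≤ t) : |x t| ≤ R := by
  by_cases hint : IntervalIntegrable (fun s => F (x s)) volume 0 t
  · obtain ⟨hcont, hderiv⟩ := continuousOn_hasDerivWithinAt_of_integral_eq hF hx ht hint
    have hx0 : x 0 = x₀ := by simpa using hx 0 le_rfl
    exact abs_le_of_hasDerivWithinAt_of_barrier hFR hFR' hcont hderiv (hx0 ▸ hx₀) t
      ⟨ht, le_rfl⟩
  · rwa [hx t ht, intervalIntegral.integral_undef hint, add_zero]

theorem intervalIntegrable_of_integral_eq (hF : Continuous F)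
    (hx : ∀ t, 0 ≤ t → x t = x₀ + ∫ s in (0:ℝ)..t, F (x s)) (hx₀ : |x₀| ≤ R)
    (hFR : F R < 0) (hFR' : 0 < F (-R)) {T : ℝ} (hT : 0 ≤ T) :
    IntervalIntegrable (fun s => F (x s)) volume 0 T := by
  set S := {τ | 0 ≤ τ ∧ IntervalIntegrable (fun s => F (x s)) volume 0 τ}
  by_contra hT'
  have hlt : ∀ τ ∈ S, τ < T := fun τ hτ => lt_of_not_ge fun h => hT' <| hτ.2.mono_set <| by
    rw [uIcc_of_le hT, uIcc_of_le hτ.1]; exact Icc_subset_Icc le_rfl h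
  have h0S : (0:ℝ) ∈ S := ⟨le_rfl, .refl⟩
  have hbdd : BddAbove S := ⟨T, fun τ hτ => (hlt τ hτ).le⟩
  have hsup0 : 0 ≤ sSup S := le_csSup hbdd h0S
  obtain ⟨M, hM⟩ :=
    isCompact_Icc.exists_bound_of_continuousOn (hF.continuousOn (s := Icc (-R) R))
  have hFx : ∀ s ∈ Ioc 0 (sSup S), ‖F (x s)‖ ≤ M := fun s hs =>
    hM _ (abs_le.mp (abs_le_of_integral_eq hF hx hx₀ hFR hFR' hs.1.le))
  /- `sup S ∈ S`: the integrals of `|F ∘ x|` over `[0, τ]`, `τ ∈ S`, are at most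
  `M · sup S`. -/
  have hsupS : sSup S ∈ S := by
    obtain ⟨u, -, hu, huS⟩ := exists_seq_tendsto_sSup ⟨0, h0S⟩ hbdd
    refine ⟨hsup0, (intervalIntegrable_iff_integrableOn_Ioc_of_le hsup0).mpr ?_⟩
    refine integrableOn_Ioc_of_intervalIntegral_norm_bounded (l := atTop) (a := fun _ => 0)
      (I := M * sSup S) (fun n => (intervalIntegrable_iff_integrableOn_Ioc_of_le (huS n).1).mp
        (huS n).2) tendsto_const_nhds hu (Eventually.of_forall fun n => ?_)
    have hun : u n ≤ sSup S := le_csSup hbdd (huS n)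
    have hM0 : 0 ≤ M := (norm_nonneg _).trans (hM x₀ (abs_le.mp hx₀))
    calc ∫ s in Ioc 0 (u n), ‖F (x s)‖ ≤ M * volume.real (Ioc 0 (u n)) :=
          (le_abs_self _).trans <| norm_setIntegral_le_of_norm_le_const
            (f := fun s => ‖F (x s)‖) measure_Ioc_lt_top fun s hs => by
              rw [norm_norm]; exact hFx s ⟨hs.1, hs.2.trans hun⟩
      _ ≤ M * sSup S := by
          rw [Real.volume_real_Ioc_of_le (huS n).1, sub_zero]
          exact mul_le_mul_of_nonneg_left hun hM0
  /- Beyond `sup S` the solution is frozen at `x₀`, so `F ∘ x` is integrable after all. -/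
  have hfrozen : IntervalIntegrable (fun s => F (x s)) volume (sSup S) T := by
    refine (intervalIntegrable_const (c := F x₀)).congr fun s hs => ?_
    rw [uIoc_of_le (hlt _ hsupS).le] at hs
    have hnot : ¬ IntervalIntegrable (fun s => F (x s)) volume 0 s := fun hint =>
      hs.1.not_ge (le_csSup hbdd ⟨hsup0.trans hs.1.le, hint⟩)
    rw [hx s (hsup0.trans hs.1.le), intervalIntegral.integral_undef hnot, add_zero]
  exact hT' (hsupS.2.trans hfrozen)

theorem trajectory_of_integral_eq (hF : Continuous F)
    (hx : ∀ t, 0 ≤ t → x t = x₀ + ∫ s in (0:ℝ)..t, F (x s)) (hx₀ : |x₀| ≤ R)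
    (hFR : F R < 0) (hFR' : 0 < F (-R)) :
    (∀ s, 0 ≤ s → |x s| ≤ R) ∧ (∀ T, 0 ≤ T → ContinuousOn x (Icc 0 T)) ∧
      ∀ s, 0 ≤ s → HasDerivWithinAt x (F (x s)) (Ici s) s := by
  have hloc := fun T (hT : 0 ≤ T) => continuousOn_hasDerivWithinAt_of_integral_eq hF hx hT
    (intervalIntegrable_of_integral_eq hF hx hx₀ hFR hFR' hT)
  exact ⟨fun s hs => abs_le_of_integral_eq hF hx hx₀ hFR hFR' hs, fun T hT => (hloc T hT).1,
    fun s hs => (hloc (s + 1) (by linarith)).2 s ⟨hs, lt_add_one s⟩⟩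

end IntegralEquation

section DecayWeight

variable {w : ℝ → ℝ} {a b c : ℝ}

theorem exp_integral_le_exp_neg_mul (hw : ContinuousOn w (Icc a b))
    (hwc : ∀ u ∈ Icc a b, w u ≤ -c) {s : ℝ} (hs : s ∈ Icc a b) :
    exp (∫ u in s..b, w u) ≤ exp (-(c * (b - s))) := by
  rw [exp_le_exp]
  have hmono := intervalIntegral.integral_mono_on hs.2
    ((hw.mono (Icc_subset_Icc_left hs.1)).intervalIntegrable_of_Icc (μ := volume) hs.2)
    intervalIntegrable_const fun u hu => hwc u ⟨hs.1.trans hu.1, hu.2⟩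
  rw [intervalIntegral.integral_const, smul_eq_mul] at hmono
  linarith

theorem continuousOn_exp_integral (hw : ContinuousOn w (Icc a b)) (hab : a ≤ b) :
    ContinuousOn (fun s => exp (∫ u in s..b, w u)) (Icc a b) := by
  have hprim := intervalIntegral.continuousOn_primitive_interval_left (μ := volume) (a := a)
    (b := b) (f := w) (by rw [uIcc_of_le hab]; exact hw.integrableOn_Icc)
  rw [uIcc_of_le hab] at hprim
  exact continuous_exp.comp_continuousOn hprim

theorem hasDerivAt_exp_integral (hw : ContinuousOn w (Icc a b)) {s : ℝ} (hs : s ∈ Ioo a b) :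
    HasDerivAt (fun s => exp (∫ u in s..b, w u)) (-w s * exp (∫ u in s..b, w u)) s := by
  have hprim := intervalIntegral.integral_hasDerivAt_left
    ((hw.mono (Icc_subset_Icc_left hs.1.le)).intervalIntegrable_of_Icc (μ := volume) hs.2.le)
    ((hw.mono Ioo_subset_Icc_self).stronglyMeasurableAtFilter isOpen_Ioo s hs)
    (hw.continuousAt (Icc_mem_nhds hs.1 hs.2))
  exact hprim.exp.congr_deriv (mul_comm _ _)

end DecayWeight

section DecayEstimates

variable {c t : ℝ}

theorem integral_exp_neg_mul_sub_le (hc : 0 < c) :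
    ∫ s in (0:ℝ)..t, exp (-(c * (t - s))) ≤ 1 / c := by
  have hsub := intervalIntegral.integral_comp_mul_sub (a := 0) (b := t) exp hc.ne' (c * t)
  simp only [mul_zero, zero_sub, sub_self, integral_exp, exp_zero, smul_eq_mul] at hsub
  rw [show (fun s => exp (-(c * (t - s)))) = fun s => exp (c * s - c * t) by
    funext s; ring_nf, hsub, one_div]
  exact mul_le_of_le_one_right (inv_nonneg.mpr hc.le) (by linarith [exp_pos (-(c * t))])

theorem abs_integral_le_of_abs_le_exp_decay {g : ℝ → ℝ} {A : ℝ} (hc : 0 < c) (ht : 0 ≤ t)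
    (hA : ∀ s ∈ Icc 0 t, |g s| ≤ A * exp (-(c * (t - s)))) :
    |∫ s in (0:ℝ)..t, g s| ≤ A / c := by
  have hA0 : 0 ≤ A := by simpa using (abs_nonneg _).trans (hA t ⟨ht, le_rfl⟩)
  by_cases hg : IntervalIntegrable g volume 0 t
  · calc |∫ s in (0:ℝ)..t, g s| ≤ ∫ s in (0:ℝ)..t, |g s| :=
          intervalIntegral.abs_integral_le_integral_abs ht
      _ ≤ ∫ s in (0:ℝ)..t, A * exp (-(c * (t - s))) :=
          intervalIntegral.integral_mono_on ht hg.abs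
            (Continuous.intervalIntegrable (by fun_prop) _ _) hA
      _ ≤ A * (1 / c) := by
          rw [intervalIntegral.integral_const_mul]
          exact mul_le_mul_of_nonneg_left (integral_exp_neg_mul_sub_le hc) hA0
      _ = A / c := mul_one_div A c
  · rw [intervalIntegral.integral_undef hg, abs_zero]
    positivity

end DecayEstimates

theorem intervalIntegrable_of_hasDerivWithinAt_Ioi {φ φ' g : ℝ → ℝ} {a b : ℝ}
    (hab : a ≤ b) (hφ' : ∀ s ∈ Ioo a b, HasDerivWithinAt φ (φ' s) (Ioi s) s)
    (hg : IntervalIntegrable g volume a b) (hle : ∀ s ∈ Ioo a b, |φ' s| ≤ g s) :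
    IntervalIntegrable φ' volume a b := by
  refine hg.mono_fun' ?_ ?_ <;> rw [uIoc_of_le hab, ← Measure.restrict_congr_set Ioo_ae_eq_Ioc]
  · exact (measurable_derivWithin_Ioi φ).aestronglyMeasurable.congr <|
      ae_restrict_of_forall_mem measurableSet_Ioo fun s hs =>
        (hφ' s hs).derivWithin (uniqueDiffWithinAt_Ioi s)
  · exact ae_restrict_of_forall_mem measurableSet_Ioo hle

section SamplingError

variable {δ t c : ℝ}

theorem intervalIntegrable_sawtooth_mul {φ : ℝ → ℝ} (hδ : 0 < δ) (ht : 0 ≤ t)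
    (hφ : ContinuousOn φ (Icc 0 t)) :
    IntervalIntegrable (fun s => (s - piD δ s - δ / 2) * φ s) volume 0 t :=
  (((continuous_id.intervalIntegrable 0 t).sub (monotone_piD hδ).intervalIntegrable).sub
    intervalIntegrable_const).mul_continuousOn (by rwa [uIcc_of_le ht])

/-- Integration by parts against the sawtooth: its primitive is `O(δ²)` and vanishes at `0`. -/
theorem abs_integral_sawtooth_mul_le {φ φ' : ℝ → ℝ} {A : ℝ} (hδ : 0 < δ) (hc : 0 < c)
    (ht : 0 ≤ t) (hφ : ContinuousOn φ (Icc 0 t))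
    (hφ' : ∀ s ∈ Ioo 0 t, HasDerivWithinAt φ (φ' s) (Ioi s) s)
    (hA : ∀ s ∈ Icc 0 t, |φ' s| ≤ A * exp (-(c * (t - s)))) :
    |∫ s in (0:ℝ)..t, (s - piD δ s - δ / 2) * φ s| ≤ δ ^ 2 / 8 * (|φ t| + A / c) := by
  set ρ := sawtoothPrimitive δ
  have hφ'int : IntervalIntegrable φ' volume 0 t :=
    intervalIntegrable_of_hasDerivWithinAt_Ioi ht hφ'
      (Continuous.intervalIntegrable (by fun_prop) _ _) fun s hs => hA s (Ioo_subset_Icc_self hs)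
  have hρφ'int : IntervalIntegrable (fun s => ρ s * φ' s) volume 0 t :=
    hφ'int.continuousOn_mul (continuous_sawtoothPrimitive hδ).continuousOn
  have hparts : ∫ s in (0:ℝ)..t, (s - piD δ s - δ / 2) * φ s
      = ρ t * φ t - ∫ s in (0:ℝ)..t, ρ s * φ' s := by
    have hftc := intervalIntegral.integral_eq_sub_of_hasDeriv_right_of_le
      (f := fun s => ρ s * φ s) ht ((continuous_sawtoothPrimitive hδ).continuousOn.mul hφ)
      (fun s hs => (hasDerivWithinAt_sawtoothPrimitive hδ s).fun_mul (hφ' s hs))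
      ((intervalIntegrable_sawtooth_mul hδ ht hφ).add hρφ'int)
    rw [intervalIntegral.integral_add (intervalIntegrable_sawtooth_mul hδ ht hφ) hρφ'int,
      show ρ 0 = 0 from sawtoothPrimitive_zero, zero_mul, sub_zero] at hftc
    linarith
  have hρφ' : |∫ s in (0:ℝ)..t, ρ s * φ' s| ≤ δ ^ 2 / 8 * A / c :=
    abs_integral_le_of_abs_le_exp_decay hc ht fun s hs => by
      rw [abs_mul, mul_assoc]
      exact mul_le_mul (abs_sawtoothPrimitive_le hδ s) (hA s hs) (abs_nonneg _) (by positivity)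
  calc |∫ s in (0:ℝ)..t, (s - piD δ s - δ / 2) * φ s|
      ≤ |ρ t| * |φ t| + |∫ s in (0:ℝ)..t, ρ s * φ' s| := by
        rw [hparts, ← abs_mul]; exact abs_sub _ _
    _ ≤ δ ^ 2 / 8 * |φ t| + δ ^ 2 / 8 * A / c := by
        gcongr
        exact abs_sawtoothPrimitive_le hδ t
    _ = δ ^ 2 / 8 * (|φ t| + A / c) := by ring

theorem abs_sub_sampled_le {h h' : ℝ → ℝ} {L : ℝ} (hδ : 0 < δ)
    (hh : ContinuousOn h (Icc 0 t)) (hh' : ∀ s ∈ Ico 0 t, HasDerivWithinAt h (h' s) (Ici s) s)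
    (hL : ∀ s ∈ Ico 0 t, |h' s| ≤ L) {s : ℝ} (hs : s ∈ Icc 0 t) :
    |h (piD δ s) - h s| ≤ L * (s - piD δ s) := by
  have hπ : Icc (piD δ s) s ⊆ Icc 0 t := Icc_subset_Icc (piD_nonneg hδ hs.1) hs.2
  have hπ' : Ico (piD δ s) s ⊆ Ico 0 t := Ico_subset_Ico (piD_nonneg hδ hs.1) hs.2
  rw [abs_sub_comm]
  exact norm_image_sub_le_of_norm_deriv_right_le_segment (hh.mono hπ)
    (fun u hu => hh' u (hπ' hu)) (fun u hu => hL u (hπ' hu)) s ⟨piD_le hδ s, le_rfl⟩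

theorem abs_sampled_increment_mul_le {h h' E : ℝ → ℝ} {L : ℝ} (hδ : 0 < δ)
    (hh : ContinuousOn h (Icc 0 t)) (hh' : ∀ s ∈ Ico 0 t, HasDerivWithinAt h (h' s) (Ici s) s)
    (hL : ∀ s ∈ Icc 0 t, |h' s| ≤ L) (hE : ∀ s ∈ Icc 0 t, |E s| ≤ exp (-(c * (t - s))))
    {s : ℝ} (hs : s ∈ Icc 0 t) :
    |(h (piD δ s) - h s) * (s - piD δ s) * E s| ≤ L * δ ^ 2 * exp (-(c * (t - s))) := by
  have hπ := sub_piD_lt hδ s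
  have hπ0 : 0 ≤ s - piD δ s := sub_nonneg.mpr (piD_le hδ s)
  have hL0 : 0 ≤ L := (abs_nonneg _).trans (hL s hs)
  have hincr := abs_sub_sampled_le hδ hh hh' (fun u hu => hL u (Ico_subset_Icc_self hu)) hs
  rw [abs_mul, abs_mul, abs_of_nonneg hπ0]
  calc |h (piD δ s) - h s| * (s - piD δ s) * |E s|
      ≤ (L * δ) * δ * exp (-(c * (t - s))) := by
        gcongr
        · exact hincr.trans (by gcongr)
        · exact hE s hs
    _ = L * δ ^ 2 * exp (-(c * (t - s))) := by ring

theorem intervalIntegrable_sampled_increment_mul {h E : ℝ → ℝ} {A : ℝ} (ht : 0 ≤ t)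
    (hh : ContinuousOn h (Icc 0 t)) (hE : ContinuousOn E (Icc 0 t))
    (hA : ∀ s ∈ Icc 0 t,
      |(h (piD δ s) - h s) * (s - piD δ s) * E s| ≤ A * exp (-(c * (t - s)))) :
    IntervalIntegrable (fun s => (h (piD δ s) - h s) * (s - piD δ s) * E s) volume 0 t := by
  refine (Continuous.intervalIntegrable (by fun_prop) 0 t).mono_fun'
    (g := fun s => A * exp (-(c * (t - s)))) ?_ ?_ <;> rw [uIoc_of_le ht]
  · exact (((measurable_comp_piD h).aestronglyMeasurable.sub
      ((hh.mono Ioc_subset_Icc_self).aestronglyMeasurable measurableSet_Ioc)).mul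
      (measurable_id.sub (measurable_comp_piD id)).aestronglyMeasurable).mul
      ((hE.mono Ioc_subset_Icc_self).aestronglyMeasurable measurableSet_Ioc)
  · exact ae_restrict_of_forall_mem measurableSet_Ioc fun s hs => hA s (Ioc_subset_Icc_self hs)

end SamplingError

theorem abs_integral_sampling_error_le {h h' w : ℝ → ℝ} {δ t c M L B : ℝ} (hδ : 0 < δ)
    (hc : 0 < c) (ht : 0 ≤ t) (hh : ContinuousOn h (Icc 0 t))
    (hh' : ∀ s ∈ Ico 0 t, HasDerivWithinAt h (h' s) (Ici s) s)
    (hM : ∀ s ∈ Icc 0 t, |h s| ≤ M) (hL : ∀ s ∈ Icc 0 t, |h' s| ≤ L)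
    (hw : ContinuousOn w (Icc 0 t)) (hwc : ∀ s ∈ Icc 0 t, w s ≤ -c)
    (hB : ∀ s ∈ Icc 0 t, |w s| ≤ B) :
    |∫ s in (0:ℝ)..t, (h (piD δ s) * (s - piD δ s) - δ / 2 * h s) * exp (∫ u in s..t, w u)|
      ≤ δ ^ 2 * (L / c + M / 8 + (L + M * B) / (8 * c)) := by
  set E := fun s => exp (∫ u in s..t, w u)
  have hEc : ContinuousOn E (Icc 0 t) := continuousOn_exp_integral hw ht
  have hE : ∀ s ∈ Icc 0 t, |E s| ≤ exp (-(c * (t - s))) := fun s hs => by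
    rw [abs_of_pos (exp_pos _)]; exact exp_integral_le_exp_neg_mul hw hwc hs
  have hincr : ∀ s ∈ Icc 0 t, |(h (piD δ s) - h s) * (s - piD δ s) * E s|
      ≤ L * δ ^ 2 * exp (-(c * (t - s))) := fun s hs =>
    abs_sampled_increment_mul_le hδ hh hh' hL hE hs
  have hφ' : ∀ s ∈ Ioo 0 t, HasDerivWithinAt (fun s => h s * E s) ((h' s - h s * w s) * E s)
      (Ioi s) s := fun s hs =>
    ((hh' s (Ioo_subset_Ico_self hs)).fun_mul
      (hasDerivAt_exp_integral hw hs).hasDerivWithinAt).mono Ioi_subset_Ici_self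
      |>.congr_deriv (by ring)
  have hφ'le : ∀ s ∈ Icc 0 t,
      |(h' s - h s * w s) * E s| ≤ (L + M * B) * exp (-(c * (t - s))) := fun s hs => by
    have hM0 : 0 ≤ M := (abs_nonneg _).trans (hM s hs)
    have hcoef : |h' s - h s * w s| ≤ L + M * B :=
      calc |h' s - h s * w s| ≤ |h' s| + |h s| * |w s| := by rw [← abs_mul]; exact abs_sub _ _
        _ ≤ L + M * B := by gcongr <;> [exact hL s hs; exact hM s hs; exact hB s hs]
    rw [abs_mul]
    exact mul_le_mul hcoef (hE s hs) (abs_nonneg _) ((abs_nonneg _).trans hcoef)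
  have hsaw := abs_integral_sawtooth_mul_le (φ := fun s => h s * E s) hδ hc ht (hh.mul hEc)
    hφ' hφ'le
  have hEt : E t = 1 := by simp [E]
  rw [hEt, mul_one] at hsaw
  have hsplit : ∀ s, (h (piD δ s) * (s - piD δ s) - δ / 2 * h s) * E s
      = (h (piD δ s) - h s) * (s - piD δ s) * E s + (s - piD δ s - δ / 2) * (h s * E s) :=
    fun s => by ring
  show |∫ s in (0:ℝ)..t, (h (piD δ s) * (s - piD δ s) - δ / 2 * h s) * E s| ≤ _
  simp_rw [hsplit]
  rw [intervalIntegral.integral_add (intervalIntegrable_sampled_increment_mul ht hh hEc hincr)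
    (intervalIntegrable_sawtooth_mul (φ := fun s => h s * E s) hδ ht (hh.mul hEc))]
  calc _ ≤ L * δ ^ 2 / c + δ ^ 2 / 8 * (|h t| + (L + M * B) / c) :=
        (abs_add_le _ _).trans (add_le_add (abs_integral_le_of_abs_le_exp_decay hc ht hincr) hsaw)
    _ ≤ L * δ ^ 2 / c + δ ^ 2 / 8 * (M + (L + M * B) / c) := by
        gcongr; exact hM t ⟨ht, le_rfl⟩
    _ = δ ^ 2 * (L / c + M / 8 + (L + M * B) / (8 * c)) := by field_simp; ring

theorem exists_abs_integral_closedLoop_sampling_error_le {f κ x : ℝ → ℝ} {lam Lκ K R : ℝ}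
    (hfd : Differentiable ℝ f) (hfd2 : Differentiable ℝ (deriv f))
    (hκd2 : Differentiable ℝ (deriv κ)) (hκc : Continuous κ)
    (hK : ∀ y, |deriv (deriv κ) y| ≤ K) (hf' : ∀ y, deriv f y ≤ -lam)
    (hκ' : ∀ y, |deriv κ y| ≤ Lκ) (hgap : Lκ < lam) (hxR : ∀ s, 0 ≤ s → |x s| ≤ R)
    (hxc : ∀ T, 0 ≤ T → ContinuousOn x (Icc 0 T))
    (hxd : ∀ s, 0 ≤ s → HasDerivWithinAt x (f (x s) + κ (x s)) (Ici s) s) :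
    ∃ C, 0 < C ∧ ∀ δ, 0 < δ → ∀ t, 0 ≤ t →
      |∫ s in (0:ℝ)..t, (deriv κ (x (piD δ s)) * f (x (piD δ s)) * (s - piD δ s)
          - δ / 2 * (deriv κ (x s) * f (x s)))
          * exp (∫ u in s..t, (deriv f (x u) + deriv κ (x u)))| ≤ C * δ ^ 2 := by
  obtain ⟨Mf, hMf⟩ : ∃ C, ∀ y ∈ Icc (-R) R, |f y| ≤ C :=
    isCompact_Icc.exists_bound_of_continuousOn hfd.continuous.continuousOn
  obtain ⟨Df, hDf⟩ : ∃ C, ∀ y ∈ Icc (-R) R, |deriv f y| ≤ C :=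
    isCompact_Icc.exists_bound_of_continuousOn hfd2.continuous.continuousOn
  obtain ⟨Mκ, hMκ⟩ : ∃ C, ∀ y ∈ Icc (-R) R, |κ y| ≤ C :=
    isCompact_Icc.exists_bound_of_continuousOn hκc.continuousOn
  have hK0 : 0 ≤ K := (abs_nonneg _).trans (hK 0)
  have hLκ0 : 0 ≤ Lκ := (abs_nonneg _).trans (hκ' 0)
  set M := Lκ * Mf
  set L := (K * Mf + Lκ * Df) * (Mf + Mκ)
  set B := Df + Lκ
  set c := lam - Lκ
  refine ⟨max (L / c + M / 8 + (L + M * B) / (8 * c)) 1, lt_max_of_lt_right one_pos,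
    fun δ hδ t ht => ?_⟩
  have hx : ∀ s ∈ Icc 0 t, x s ∈ Icc (-R) R := fun s hs => abs_le.mp (hxR s hs.1)
  have hh : ContinuousOn (fun s => deriv κ (x s) * f (x s)) (Icc 0 t) :=
    (hκd2.continuous.comp_continuousOn (hxc t ht)).mul
      (hfd.continuous.comp_continuousOn (hxc t ht))
  have hh' : ∀ s ∈ Ico 0 t, HasDerivWithinAt (fun s => deriv κ (x s) * f (x s))
      ((deriv (deriv κ) (x s) * f (x s) + deriv κ (x s) * deriv f (x s)) * (f (x s) + κ (x s)))
      (Ici s) s := fun s hs =>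
    (((hκd2 _).hasDerivAt.comp_hasDerivWithinAt s (hxd s hs.1)).fun_mul
      ((hfd _).hasDerivAt.comp_hasDerivWithinAt s (hxd s hs.1))).congr_deriv
      (by simp only [Function.comp_apply]; ring)
  have hM : ∀ s ∈ Icc 0 t, |deriv κ (x s) * f (x s)| ≤ M := fun s hs => by
    rw [abs_mul]
    exact mul_le_mul (hκ' _) (hMf _ (hx s hs)) (abs_nonneg _) hLκ0
  have hL : ∀ s ∈ Icc 0 t, |(deriv (deriv κ) (x s) * f (x s) + deriv κ (x s) * deriv f (x s))
      * (f (x s) + κ (x s))| ≤ L := fun s hs => by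
    have hcoef : |deriv (deriv κ) (x s) * f (x s) + deriv κ (x s) * deriv f (x s)|
        ≤ K * Mf + Lκ * Df := by
      refine (abs_add_le _ _).trans ?_
      rw [abs_mul, abs_mul]
      gcongr
      exacts [hK _, hMf _ (hx s hs), hκ' _, hDf _ (hx s hs)]
    rw [abs_mul]
    exact mul_le_mul hcoef
      ((abs_add_le _ _).trans (add_le_add (hMf _ (hx s hs)) (hMκ _ (hx s hs))))
      (abs_nonneg _) ((abs_nonneg _).trans hcoef)
  have hw : ContinuousOn (fun u => deriv f (x u) + deriv κ (x u)) (Icc 0 t) :=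
    (hfd2.continuous.comp_continuousOn (hxc t ht)).add
      (hκd2.continuous.comp_continuousOn (hxc t ht))
  have hwc : ∀ s ∈ Icc 0 t, deriv f (x s) + deriv κ (x s) ≤ -c := fun s _ => by
    linarith [hf' (x s), (abs_le.mp (hκ' (x s))).2]
  have hB : ∀ s ∈ Icc 0 t, |deriv f (x s) + deriv κ (x s)| ≤ B := fun s hs =>
    (abs_add_le _ _).trans (add_le_add (hDf _ (hx s hs)) (hκ' _))
  calc _ ≤ δ ^ 2 * (L / c + M / 8 + (L + M * B) / (8 * c)) :=
        abs_integral_sampling_error_le hδ (sub_pos.mpr hgap) ht hh hh' hM hL hw hwc hB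
    _ ≤ _ := by rw [mul_comm]; gcongr; exact le_max_left _ _

theorem stmt9_general
    (f κ : ℝ → ℝ) (x₀ : ℝ) (x : ℝ → ℝ)
    -- Assumption (A1)
    (lam Lκ : ℝ)
    (hcontr : ∀ a b : ℝ, (a - b) * (f a - f b) ≤ -lam * (a - b) ^ 2)
    (hκLip : ∀ a b : ℝ, |κ a - κ b| ≤ Lκ * |a - b|)
    (hgap : lam / 2 - Lκ > 0)
    -- Assumption (A3)
    (hfd : Differentiable ℝ f) (hfd2 : Differentiable ℝ (deriv f))
    (hκd2 : Differentiable ℝ (deriv κ))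
    (K : ℝ) (hK : ∀ y : ℝ, |deriv (deriv κ) y| ≤ K)
    -- the closed-loop ODE `dx/dt = f(x) + κ(x)`, `x(0) = x₀`
    (hx : ∀ t : ℝ, 0 ≤ t → x t = x₀ + ∫ s in (0:ℝ)..t, (f (x s) + κ (x s)))
    :
    ∀ p : ℕ, 1 ≤ p → ∃ C : ℝ, 0 < C ∧
      ∀ ε δ : ℝ, 0 < ε → ε < 1 → 0 < δ → δ < 1 → ∀ t : ℝ, 0 ≤ t →
      |∫ s in (0:ℝ)..t,
          ((1 / ε) * deriv κ (x (piD δ s)) * f (x (piD δ s)) * (s - piD δ s)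
            - (δ / (2 * ε)) * deriv κ (x s) * f (x s)) *
            Real.exp (∫ u in s..t, (deriv f (x u) + deriv κ (x u)))| ^ p
        ≤ C * δ ^ (2 * p) / ε ^ p := by
  intro p _
  have hκc : Continuous κ := (lipschitzWith_of_abs_sub_le hκLip).continuous
  have hLκ : 0 ≤ Lκ := (abs_nonneg _).trans (abs_deriv_le_of_lipschitz hκLip 0)
  obtain ⟨R, hx₀R, hFR, hFR'⟩ := exists_barrier_of_dissipative (by linarith : 0 < lam - Lκ)
    (dissipative_add_lipschitz hcontr hκLip) x₀
  obtain ⟨hxR, hxc, hxd⟩ :=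
    trajectory_of_integral_eq (hfd.continuous.add hκc) hx hx₀R hFR hFR'
  obtain ⟨C, hC, hbound⟩ := exists_abs_integral_closedLoop_sampling_error_le hfd hfd2 hκd2 hκc
    hK (fun y => deriv_le_of_dissipative hcontr (hfd y)) (abs_deriv_le_of_lipschitz hκLip)
    (by linarith) hxR hxc hxd
  refine ⟨C ^ p, pow_pos hC p, fun ε δ hε _ hδ _ t ht => ?_⟩
  have hscale : ∀ s, ((1 / ε) * deriv κ (x (piD δ s)) * f (x (piD δ s)) * (s - piD δ s)
      - (δ / (2 * ε)) * deriv κ (x s) * f (x s))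
        * exp (∫ u in s..t, (deriv f (x u) + deriv κ (x u)))
      = ε⁻¹ * ((deriv κ (x (piD δ s)) * f (x (piD δ s)) * (s - piD δ s)
        - δ / 2 * (deriv κ (x s) * f (x s)))
          * exp (∫ u in s..t, (deriv f (x u) + deriv κ (x u)))) :=
    fun s => by ring
  simp_rw [hscale, intervalIntegral.integral_const_mul, abs_mul, abs_inv, abs_of_pos hε]
  calc _ ≤ (ε⁻¹ * (C * δ ^ 2)) ^ p := by gcongr; exact hbound δ hδ t ht
    _ = C ^ p * δ ^ (2 * p) / ε ^ p := by rw [mul_pow, mul_pow, ← pow_mul, inv_pow]; ring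

/-- Uniform-in-time bound `|𝒮₁^{ε,δ}(t)|^p ≤ C·δ^{2p}/ε^p` where
`𝒮₁^{ε,δ}(t) = ∫₀ᵗ ((1/ε)·κ'(x(π_δ(s)))·f(x(π_δ(s)))·(s − π_δ(s))
− (δ/(2ε))·κ'(x(s))·f(x(s)))·E(s,t) ds`. -/
theorem stmt9
    (f κ : ℝ → ℝ) (x₀ : ℝ) (x : ℝ → ℝ)
    -- Assumption (A1)
    (lam ξ μ Lκ γ : ℝ) (q : ℕ)
    (hlam : 0 < lam) (hξ : 0 < ξ) (hμ : 0 < μ) (hLκ : 0 < Lκ) (hγ : 0 < γ)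
    (hcontr : ∀ a b : ℝ, (a - b) * (f a - f b) ≤ -lam * (a - b) ^ 2)
    (hfLip : ∀ a b : ℝ, |f a - f b| ≤ (ξ * (|a| ^ q + |b| ^ q) + μ) * |a - b|)
    (hκLip : ∀ a b : ℝ, |κ a - κ b| ≤ Lκ * |a - b|)
    (hgap : lam / 2 - Lκ > 0)
    (hκbd : ∀ a : ℝ, |κ a| ≤ γ)
    -- Assumption (A3)
    (hfd : Differentiable ℝ f) (hfd2 : Differentiable ℝ (deriv f))
    (hκd : Differentiable ℝ κ) (hκd2 : Differentiable ℝ (deriv κ))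
    (K : ℝ) (hK : ∀ y : ℝ, |deriv (deriv κ) y| ≤ K)
    (cf : ℝ) (rf : ℕ) (hf2 : ∀ y : ℝ, |deriv (deriv f) y| ≤ cf * (1 + |y| ^ rf))
    (Cstar : ℝ) (hCstar : 0 < Cstar)
    (hint : ∀ m : ℕ, (m = 1 ∨ m = 2) → ∀ t : ℝ, 0 ≤ t →
      (∫ s in (0:ℝ)..t,
        Real.exp ((m : ℝ) * ∫ u in s..t, (deriv f (x u) + deriv κ (x u)))) ≤ Cstar)
    -- the closed-loop ODE `dx/dt = f(x) + κ(x)`, `x(0) = x₀`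
    (hx : ∀ t : ℝ, 0 ≤ t → x t = x₀ + ∫ s in (0:ℝ)..t, (f (x s) + κ (x s)))
    :
    ∀ p : ℕ, 1 ≤ p → ∃ C : ℝ, 0 < C ∧
      ∀ ε δ : ℝ, 0 < ε → ε < 1 → 0 < δ → δ < 1 → ∀ t : ℝ, 0 ≤ t →
      |∫ s in (0:ℝ)..t,
          ((1 / ε) * deriv κ (x (piD δ s)) * f (x (piD δ s)) * (s - piD δ s)
            - (δ / (2 * ε)) * deriv κ (x s) * f (x s)) *
            Real.exp (∫ u in s..t, (deriv f (x u) + deriv κ (x u)))| ^ p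
        ≤ C * δ ^ (2 * p) / ε ^ p :=
  stmt9_general f κ x₀ x lam Lκ hcontr hκLip hgap hfd hfd2 hκd2 K hK hx
end
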